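/- arXiv:math/0006048 — 2 statements merged into one kernel-verified Lean document; each statement's English description precedes it below -/
import Mathlib

section
/- Let A be a bialgebra over a field k and let M, N be left-right Yetter-Drinfel'd modules over A. For natural numbers n, p ≥ 0, define Y^{n,p}(M,N) = Hom_k(A^{⊗n} ⊗ M, N ⊗ A^{⊗p}), and define the horizontal face maps b_i^{n,p}: Y^{n,p} → Y^{n+1,p} for 0 ≤ i ≤ n+1 by: b_0(f)(a^1⊗...⊗a^{n+1}⊗m) = Σ (a^1)_1·f(a^2⊗...⊗a^{n+1}⊗m)^0 ⊗ (a^1)_2 f(...)^1 ⊗ ... ⊗ (a^1)_{p+1} f(...)^p (diagonal left action on N⊗A^p), b_i(f) multiplies a^i a^{i+1} for 1 ≤ i ≤ n, and b_{n+1}(f)(a^1⊗...⊗a^{n+1}⊗m) = Σ f(a^1⊗...⊗a^n⊗(a^{n+1})_{p+1}·m)^0 ⊗ f(...)^1 (a^{n+1})_1 ⊗ ... ⊗ f(...)^p (a^{n+1})_p. Then for all 0 ≤ i < j ≤ n+2, one has b_j^{n+1,p} ∘ b_i^{n,p} = b_i^{n+1,p} ∘ b_{j-1}^{n,p}. -/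
open TensorProduct
noncomputable section

namespace PS

variable (k : Type) [Field k] (A : Type) [Ring A] [Bialgebra k A]

/-- Left-nested tensor powers with base `B`: `pwr B n = B ⊗ A ⊗ ⋯ ⊗ A` (`n` copies of `A`). -/
def pwr (B : ModuleCat k) : ℕ → ModuleCat k
  | 0 => B
  | n + 1 => ModuleCat.of k (pwr B n ⊗[k] A)

/-- `A^{⊗ n}` realized as `pwr k n`, i.e. `k ⊗ A ⊗ ⋯ ⊗ A`. -/
abbrev Pk (n : ℕ) : ModuleCat k := pwr k A (ModuleCat.of k k) n

abbrev μA : A ⊗[k] A →ₗ[k] A := LinearMap.mul' k A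
abbrev ΔA : A →ₗ[k] A ⊗[k] A := Coalgebra.comul
abbrev εA : A →ₗ[k] k := Coalgebra.counit

/-- Multiplication of the tensorands in slots `i` and `i+1` (`1 ≤ i ≤ n`);
junk (zero map) for other `i`. -/
def mulP : (n : ℕ) → (i : ℕ) → ((Pk k A (n+1) : Type) →ₗ[k] Pk k A n)
  | 0, _ => 0
  | n + 1, i =>
      if i = n + 1 then
        (TensorProduct.map (LinearMap.id : (Pk k A n : Type) →ₗ[k] Pk k A n) (μA k A)).comp
          (TensorProduct.assoc k (Pk k A n) A A).toLinearMap
      else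
        TensorProduct.map (mulP n i) (LinearMap.id : A →ₗ[k] A)

/-- Insert an `A`-factor at the innermost slot (slot 1). -/
def insP : (n : ℕ) → (A ⊗[k] (Pk k A n : Type)) ≃ₗ[k] (Pk k A (n+1) : Type)
  | 0 => TensorProduct.comm k A k
  | n + 1 =>
      (TensorProduct.assoc k A (Pk k A n) A).symm.trans
        (TensorProduct.congr (insP n) (LinearEquiv.refl k A))

section NM

variable {N : Type} [AddCommGroup N] [Module k N]

/-- The left diagonal action of `A` on `N ⊗ A^{⊗ p}` built from a base action `ωN`. -/
def ldiag (ωN : A ⊗[k] N →ₗ[k] N) :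
    (p : ℕ) → (A ⊗[k] (pwr k A (ModuleCat.of k N) p : Type) →ₗ[k] pwr k A (ModuleCat.of k N) p)
  | 0 => ωN
  | p + 1 =>
      (TensorProduct.map (ldiag ωN p) (μA k A)).comp <|
        ((TensorProduct.tensorTensorTensorComm k A A
            (pwr k A (ModuleCat.of k N) p : Type) A).toLinearMap).comp
          (TensorProduct.map (ΔA k A) (LinearMap.id :
            ((pwr k A (ModuleCat.of k N) p : Type) ⊗[k] A) →ₗ[k] _))

/-- Right diagonal multiplication on the `A`-slots of `N ⊗ A^{⊗ p}` (counit on the base). -/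
def rdiagE : (p : ℕ) →
    ((pwr k A (ModuleCat.of k N) p : Type) ⊗[k] A →ₗ[k] pwr k A (ModuleCat.of k N) p)
  | 0 => (TensorProduct.rid k N).toLinearMap.comp
      (TensorProduct.map (LinearMap.id : N →ₗ[k] N) (εA k A))
  | p + 1 =>
      (TensorProduct.map (rdiagE p) (μA k A)).comp <|
        ((TensorProduct.tensorTensorTensorComm k
            (pwr k A (ModuleCat.of k N) p : Type) A A A).toLinearMap).comp
          (TensorProduct.map
            (LinearMap.id : ((pwr k A (ModuleCat.of k N) p : Type) ⊗[k] A) →ₗ[k] _) (ΔA k A))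

/-- Right diagonal action on `N ⊗ A^{⊗ p}` built from a base (right) action `ωNr`. -/
def rdiagAct (ωNr : N ⊗[k] A →ₗ[k] N) : (p : ℕ) →
    ((pwr k A (ModuleCat.of k N) p : Type) ⊗[k] A →ₗ[k] pwr k A (ModuleCat.of k N) p)
  | 0 => ωNr
  | p + 1 =>
      (TensorProduct.map (rdiagAct ωNr p) (μA k A)).comp <|
        ((TensorProduct.tensorTensorTensorComm k
            (pwr k A (ModuleCat.of k N) p : Type) A A A).toLinearMap).comp
          (TensorProduct.map
            (LinearMap.id : ((pwr k A (ModuleCat.of k N) p : Type) ⊗[k] A) →ₗ[k] _) (ΔA k A))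

end NM

/-- `dL : A^{⊗ n} → A ⊗ A^{⊗ n}`, `a^1 ⊗ ⋯ ⊗ a^n ↦ Σ (a^1)_1 ⋯ (a^n)_1 ⊗ ((a^1)_2 ⊗ ⋯ ⊗ (a^n)_2)`. -/
def dL : (n : ℕ) → ((Pk k A n : Type) →ₗ[k] A ⊗[k] (Pk k A n : Type))
  | 0 => (TensorProduct.map (Algebra.linearMap k A) (LinearMap.id : k →ₗ[k] k)).comp
      (TensorProduct.lid k k).symm.toLinearMap
  | n + 1 =>
      (TensorProduct.map (μA k A)
          (LinearMap.id : ((Pk k A n : Type) ⊗[k] A) →ₗ[k] _)).comp <|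
        ((TensorProduct.tensorTensorTensorComm k A (Pk k A n : Type) A A).toLinearMap).comp
          (TensorProduct.map (dL n) (ΔA k A))

/-- `dR : A^{⊗ n} → A^{⊗ n} ⊗ A`, `a^1 ⊗ ⋯ ⊗ a^n ↦ Σ ((a^1)_1 ⊗ ⋯ ⊗ (a^n)_1) ⊗ (a^1)_2 ⋯ (a^n)_2`. -/
def dR : (n : ℕ) → ((Pk k A n : Type) →ₗ[k] (Pk k A n : Type) ⊗[k] A)
  | 0 => (TensorProduct.map (LinearMap.id : k →ₗ[k] k) (Algebra.linearMap k A)).comp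
      (TensorProduct.rid k k).symm.toLinearMap
  | n + 1 =>
      (TensorProduct.map
          (LinearMap.id : ((Pk k A n : Type) ⊗[k] A) →ₗ[k] _) (μA k A)).comp <|
        ((TensorProduct.tensorTensorTensorComm k (Pk k A n : Type) A A A).toLinearMap).comp
          (TensorProduct.map (dR n) (ΔA k A))

section Base

variable {N : Type} [AddCommGroup N] [Module k N]

/-- Apply `ρN : N → N ⊗ A` to the base of `N ⊗ A^{⊗ p}`. -/
def rhoBase (ρN : N →ₗ[k] N ⊗[k] A) : (p : ℕ) →
    ((pwr k A (ModuleCat.of k N) p : Type) →ₗ[k] pwr k A (ModuleCat.of k (N ⊗[k] A)) p)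
  | 0 => ρN
  | p + 1 => TensorProduct.map (rhoBase ρN p) (LinearMap.id : A →ₗ[k] A)

/-- Reinterpret `(N ⊗ A) ⊗ A^{⊗ p}` as `N ⊗ A^{⊗ (p+1)}`. -/
def shiftB : (p : ℕ) →
    ((pwr k A (ModuleCat.of k (N ⊗[k] A)) p : Type) ≃ₗ[k] pwr k A (ModuleCat.of k N) (p+1))
  | 0 => LinearEquiv.refl k (N ⊗[k] A)
  | p + 1 => TensorProduct.congr (shiftB p) (LinearEquiv.refl k A)

/-- Multiply the `A`-component of the base `N ⊗ A` on the right by an element of `A`. -/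
def rmulBase : (p : ℕ) →
    ((pwr k A (ModuleCat.of k (N ⊗[k] A)) p : Type) ⊗[k] A →ₗ[k]
      pwr k A (ModuleCat.of k (N ⊗[k] A)) p)
  | 0 => (TensorProduct.map (LinearMap.id : N →ₗ[k] N) (μA k A)).comp
      (TensorProduct.assoc k N A A).toLinearMap
  | p + 1 =>
      (TensorProduct.map (rmulBase p) (LinearMap.id : A →ₗ[k] A)).comp <|
        ((TensorProduct.assoc k (pwr k A (ModuleCat.of k (N ⊗[k] A)) p : Type) A A).symm.toLinearMap).comp <|
          (TensorProduct.map
            (LinearMap.id : (pwr k A (ModuleCat.of k (N ⊗[k] A)) p : Type) →ₗ[k] _)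
            (TensorProduct.comm k A A).toLinearMap).comp
            (TensorProduct.assoc k
              (pwr k A (ModuleCat.of k (N ⊗[k] A)) p : Type) A A).toLinearMap

/-- Apply the counit to the `A`-component of the base `N ⊗ A`. -/
def epsBase : (p : ℕ) →
    ((pwr k A (ModuleCat.of k (N ⊗[k] A)) p : Type) →ₗ[k] pwr k A (ModuleCat.of k N) p)
  | 0 => (TensorProduct.rid k N).toLinearMap.comp
      (TensorProduct.map (LinearMap.id : N →ₗ[k] N) (εA k A))
  | p + 1 => TensorProduct.map (epsBase p) (LinearMap.id : A →ₗ[k] A)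

/-- Apply `Δ` on the `i`-th `A`-slot (`1 ≤ i ≤ p`) of `N ⊗ A^{⊗ p}`; junk otherwise. -/
def comulAt : (p : ℕ) → (i : ℕ) →
    ((pwr k A (ModuleCat.of k N) p : Type) →ₗ[k] pwr k A (ModuleCat.of k N) (p+1))
  | 0, _ => 0
  | p + 1, i =>
      if i = p + 1 then
        ((TensorProduct.assoc k (pwr k A (ModuleCat.of k N) p : Type) A A).symm.toLinearMap).comp
          (TensorProduct.map
            (LinearMap.id : (pwr k A (ModuleCat.of k N) p : Type) →ₗ[k] _) (ΔA k A))
      else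
        TensorProduct.map (comulAt p i) (LinearMap.id : A →ₗ[k] A)

/-- Left coaction on `N ⊗ A^{⊗ p}` coming from a left coaction on the base. -/
def lcoBase (ρNl : N →ₗ[k] A ⊗[k] N) : (p : ℕ) →
    ((pwr k A (ModuleCat.of k N) p : Type) →ₗ[k]
      A ⊗[k] (pwr k A (ModuleCat.of k N) p : Type))
  | 0 => ρNl
  | p + 1 =>
      ((TensorProduct.assoc k A (pwr k A (ModuleCat.of k N) p : Type) A).toLinearMap).comp
        (TensorProduct.map (lcoBase ρNl p) (LinearMap.id : A →ₗ[k] A))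

end Base

section Bicomplex

variable {M N : Type} [AddCommGroup M] [Module k M] [AddCommGroup N] [Module k N]

/-- `A^{⊗ n} ⊗ M`, the domain of the `(n,p)` cochains. -/
abbrev Dm (M : Type) [AddCommGroup M] [Module k M] (n : ℕ) : Type :=
  (Pk k A n : Type) ⊗[k] M

/-- `N ⊗ A^{⊗ p}`. -/
abbrev Cd (N : Type) [AddCommGroup N] [Module k N] (p : ℕ) : Type :=
  (pwr k A (ModuleCat.of k N) p : Type)

/-- The space of `(n,p)` cochains `Hom(A^{⊗ n} ⊗ M, N ⊗ A^{⊗ p})`. -/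
abbrev Yc (M N : Type) [AddCommGroup M] [Module k M] [AddCommGroup N] [Module k N]
    (n p : ℕ) : Type := Dm k A M n →ₗ[k] Cd k A N p

variable (ωM : A ⊗[k] M →ₗ[k] M) (ρM : M →ₗ[k] M ⊗[k] A)
variable (ωN : A ⊗[k] N →ₗ[k] N) (ρN : N →ₗ[k] N ⊗[k] A)

/-- `b_0`: the face using the diagonal left action of `a^1` on `N ⊗ A^{⊗ p}`. -/
def face0 (n p : ℕ) (f : Yc k A M N n p) : Yc k A M N (n+1) p :=
  (ldiag k A ωN p).comp <|
    (TensorProduct.map (LinearMap.id : A →ₗ[k] A) f).comp <|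
      ((TensorProduct.assoc k A (Pk k A n : Type) M).toLinearMap).comp
        (TensorProduct.map (insP k A n).symm.toLinearMap (LinearMap.id : M →ₗ[k] M))

/-- `b_i`, `1 ≤ i ≤ n`: multiply the adjacent arguments `a^i a^{i+1}`. -/
def faceMid (n p : ℕ) (i : ℕ) (f : Yc k A M N n p) : Yc k A M N (n+1) p :=
  f.comp (TensorProduct.map (mulP k A n i) (LinearMap.id : M →ₗ[k] M))

/-- `b_{n+1}` in the Hopf-module case: `f(a^1 ⊗ ⋯ ⊗ a^n ⊗ a^{n+1}·m)`. -/
def faceLastH (n p : ℕ) (f : Yc k A M N n p) : Yc k A M N (n+1) p :=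
  f.comp <|
    (TensorProduct.map (LinearMap.id : (Pk k A n : Type) →ₗ[k] _) ωM).comp
      (TensorProduct.assoc k (Pk k A n : Type) A M).toLinearMap

/-- `b_{n+1}` in the Yetter-Drinfel'd case. -/
def faceLastYD (n p : ℕ) (f : Yc k A M N n p) : Yc k A M N (n+1) p :=
  (rdiagE k A p).comp <|
    ((TensorProduct.comm k A (Cd k A N p)).toLinearMap).comp <|
      (TensorProduct.map (LinearMap.id : A →ₗ[k] A)
        (f.comp (TensorProduct.map (LinearMap.id : (Pk k A n : Type) →ₗ[k] _) ωM))).comp <|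
        ((TensorProduct.leftComm k (Pk k A n : Type) A (A ⊗[k] M)).toLinearMap).comp <|
          (TensorProduct.map (LinearMap.id : (Pk k A n : Type) →ₗ[k] _)
            (TensorProduct.assoc k A A M).toLinearMap).comp <|
            ((TensorProduct.assoc k (Pk k A n : Type) (A ⊗[k] A) M).toLinearMap).comp
              (TensorProduct.map
                (TensorProduct.map (LinearMap.id : (Pk k A n : Type) →ₗ[k] _) (ΔA k A))
                (LinearMap.id : M →ₗ[k] M))

/-- The Yetter-Drinfel'd horizontal faces `b_i^{n,p}`, `0 ≤ i ≤ n+1`. -/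
def bYD (n p : ℕ) (i : ℕ) (f : Yc k A M N n p) : Yc k A M N (n+1) p :=
  if i = 0 then face0 k A ωN n p f
  else if i ≤ n then faceMid k A n p i f
  else faceLastYD k A ωM n p f

/-- The Hopf-module horizontal faces `b_i^{n,p}`, `0 ≤ i ≤ n+1`. -/
def bH (n p : ℕ) (i : ℕ) (f : Yc k A M N n p) : Yc k A M N (n+1) p :=
  if i = 0 then face0 k A ωN n p f
  else if i ≤ n then faceMid k A n p i f
  else faceLastH k A ωM n p f

/-- `c_0` in the Hopf-module case: apply `ρ_N` to the `N`-component of the output. -/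
def cof0H (n p : ℕ) (f : Yc k A M N n p) : Yc k A M N n (p+1) :=
  ((shiftB k A p).toLinearMap).comp ((rhoBase k A ρN p).comp f)

/-- `c_0` in the Yetter-Drinfel'd case. -/
def cof0YD (n p : ℕ) (f : Yc k A M N n p) : Yc k A M N n (p+1) :=
  ((shiftB k A p).toLinearMap).comp <|
    (rmulBase k A p).comp <|
      ((TensorProduct.comm k A
          (pwr k A (ModuleCat.of k (N ⊗[k] A)) p : Type)).toLinearMap).comp <|
        (TensorProduct.map (LinearMap.id : A →ₗ[k] A) ((rhoBase k A ρN p).comp f)).comp <|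
          ((TensorProduct.assoc k A (Pk k A n : Type) M).toLinearMap).comp
            (TensorProduct.map (dL k A n) (LinearMap.id : M →ₗ[k] M))

/-- `c_{p+1}`: uses the right comodule structure of `M`. -/
def cofLast (n p : ℕ) (f : Yc k A M N n p) : Yc k A M N n (p+1) :=
  (TensorProduct.map f (μA k A)).comp <|
    ((TensorProduct.tensorTensorTensorComm k (Pk k A n : Type) A M A).toLinearMap).comp
      (TensorProduct.map (dR k A n) ρM)

/-- The Yetter-Drinfel'd vertical cofaces `c_j^{n,p}`, `0 ≤ j ≤ p+1`. -/
def cYD (n p : ℕ) (j : ℕ) (f : Yc k A M N n p) : Yc k A M N n (p+1) :=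
  if j = 0 then cof0YD k A ρN n p f
  else if j ≤ p then (comulAt k A p j).comp f
  else cofLast k A ρM n p f

/-- The Hopf-module vertical cofaces `c_j^{n,p}`, `0 ≤ j ≤ p+1`. -/
def cH (n p : ℕ) (j : ℕ) (f : Yc k A M N n p) : Yc k A M N n (p+1) :=
  if j = 0 then cof0H k A ρN n p f
  else if j ≤ p then (comulAt k A p j).comp f
  else cofLast k A ρM n p f

/-- The horizontal differential (Yetter-Drinfel'd case). -/
def dmYD (n p : ℕ) (f : Yc k A M N n p) : Yc k A M N (n+1) p :=
  ∑ i ∈ Finset.range (n+2), ((-1 : ℤ)^i) • bYD k A ωM ωN n p i f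

/-- The vertical differential (Yetter-Drinfel'd case). -/
def dcYD (n p : ℕ) (f : Yc k A M N n p) : Yc k A M N n (p+1) :=
  ∑ j ∈ Finset.range (p+2), ((-1 : ℤ)^j) • cYD k A ρM ρN n p j f

/-- The horizontal differential (Hopf-module case). -/
def dmH (n p : ℕ) (f : Yc k A M N n p) : Yc k A M N (n+1) p :=
  ∑ i ∈ Finset.range (n+2), ((-1 : ℤ)^i) • bH k A ωM ωN n p i f

/-- The vertical differential (Hopf-module case). -/
def dcH (n p : ℕ) (f : Yc k A M N n p) : Yc k A M N n (p+1) :=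
  ∑ j ∈ Finset.range (p+2), ((-1 : ℤ)^j) • cH k A ρM ρN n p j f

end Bicomplex

section Structures

variable {M : Type} [AddCommGroup M] [Module k M]

/-- `(M, ωM)` is a left `A`-module. -/
def IsModule (ωM : A ⊗[k] M →ₗ[k] M) : Prop :=
  (∀ m : M, ωM ((1 : A) ⊗ₜ m) = m) ∧
  ∀ (a b : A) (m : M), ωM (a ⊗ₜ ωM (b ⊗ₜ m)) = ωM ((a * b) ⊗ₜ m)

/-- `(M, ρM)` is a right `A`-comodule. -/
def IsComodule (ρM : M →ₗ[k] M ⊗[k] A) : Prop :=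
  ((TensorProduct.rid k M).toLinearMap.comp
      ((TensorProduct.map (LinearMap.id : M →ₗ[k] M) (εA k A)).comp ρM) = LinearMap.id) ∧
  (TensorProduct.map ρM (LinearMap.id : A →ₗ[k] A)).comp ρM =
    ((TensorProduct.assoc k M A A).symm.toLinearMap).comp
      ((TensorProduct.map (LinearMap.id : M →ₗ[k] M) (ΔA k A)).comp ρM)

/-- The map `a ⊗ m ↦ Σ a_1·m_0 ⊗ a_2 m_1`. -/
def hopfRHS (ωM : A ⊗[k] M →ₗ[k] M) (ρM : M →ₗ[k] M ⊗[k] A) :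
    A ⊗[k] M →ₗ[k] M ⊗[k] A :=
  (TensorProduct.map ωM (μA k A)).comp <|
    ((TensorProduct.tensorTensorTensorComm k A A M A).toLinearMap).comp
      (TensorProduct.map (ΔA k A) ρM)

/-- The map `a ⊗ m ↦ Σ (a_2·m)_0 ⊗ (a_2·m)_1 a_1`. -/
def ydLHS (ωM : A ⊗[k] M →ₗ[k] M) (ρM : M →ₗ[k] M ⊗[k] A) :
    A ⊗[k] M →ₗ[k] M ⊗[k] A :=
  (TensorProduct.map (LinearMap.id : M →ₗ[k] M) (μA k A)).comp <|
    ((TensorProduct.assoc k M A A).toLinearMap).comp <|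
      ((TensorProduct.comm k A (M ⊗[k] A)).toLinearMap).comp <|
        (TensorProduct.map (LinearMap.id : A →ₗ[k] A) (ρM.comp ωM)).comp <|
          ((TensorProduct.assoc k A A M).toLinearMap).comp
            (TensorProduct.map (ΔA k A) (LinearMap.id : M →ₗ[k] M))

/-- `(M, ωM, ρM)` is a left-right Yetter-Drinfel'd module over `A`. -/
def IsYetterDrinfeld (ωM : A ⊗[k] M →ₗ[k] M) (ρM : M →ₗ[k] M ⊗[k] A) : Prop :=
  IsModule k A ωM ∧ IsComodule k A ρM ∧
    ydLHS k A ωM ρM = hopfRHS k A ωM ρM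

/-- `(M, ωM, ρM)` is a left-right Hopf module over `A`. -/
def IsHopfModule (ωM : A ⊗[k] M →ₗ[k] M) (ρM : M →ₗ[k] M ⊗[k] A) : Prop :=
  IsModule k A ωM ∧ IsComodule k A ρM ∧
    ρM.comp ωM = hopfRHS k A ωM ρM

end Structures

/-!
Everything reduces to three facts about the actions on `N ⊗ A^{⊗ p}`: the diagonal left action
`ldiag` and the right diagonal multiplication `rdiagE` are associative and commute with each other.
Each is obtained from its predecessor in `p` by tensoring with the multiplication of `A` and pulling
back along the algebra map `Δ`, and these constructions preserve associativity and commutation.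
Then `b₁ b₀ = b₀ b₀` is associativity of `ldiag`, `b_{n+2} b₀ = b₀ b_{n+1}` is the commutation, and
`b_{n+2} b_{n+1} = b_{n+1} b_{n+1}` follows from associativity of `rdiagE` and of the action on `M`
together with `Δ (c d) = Δ c Δ d`. The remaining relations only involve the multiplication maps
`mulP` on tensor powers of `A`.
-/

section Actions

variable {k R S X Y : Type} [CommSemiring k] [Semiring R] [Algebra k R] [Semiring S]
  [Algebra k S] [AddCommMonoid X] [Module k X] [AddCommMonoid Y] [Module k Y]

def IsLeftAction (ω : R ⊗[k] X →ₗ[k] X) : Prop :=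
  ω ∘ₗ ω.lTensor R = ω ∘ₗ (LinearMap.mul' k R).rTensor X ∘ₗ (TensorProduct.assoc k R R X).symm

def IsRightAction (ω : X ⊗[k] R →ₗ[k] X) : Prop :=
  ω ∘ₗ ω.rTensor R = ω ∘ₗ (LinearMap.mul' k R).lTensor X ∘ₗ (TensorProduct.assoc k X R R)

def ActionsCommute (ω : R ⊗[k] X →ₗ[k] X) (ω' : X ⊗[k] S →ₗ[k] X) : Prop :=
  ω' ∘ₗ ω.rTensor S = ω ∘ₗ ω'.lTensor R ∘ₗ (TensorProduct.assoc k R X S)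

theorem isLeftAction_iff {ω : R ⊗[k] X →ₗ[k] X} :
    IsLeftAction ω ↔ ∀ (a b : R) (x : X), ω (a ⊗ₜ ω (b ⊗ₜ x)) = ω ((a * b) ⊗ₜ x) := by
  refine ⟨fun h a b x => by simpa using congr($h (a ⊗ₜ (b ⊗ₜ x))), fun h => ?_⟩
  refine TensorProduct.ext_threefold' fun a b x => ?_
  simp [h]

theorem isRightAction_iff {ω : X ⊗[k] R →ₗ[k] X} :
    IsRightAction ω ↔ ∀ (x : X) (a b : R), ω (ω (x ⊗ₜ a) ⊗ₜ b) = ω (x ⊗ₜ (a * b)) := by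
  refine ⟨fun h x a b => by simpa using congr($h ((x ⊗ₜ a) ⊗ₜ b)), fun h => ?_⟩
  refine TensorProduct.ext_threefold fun x a b => ?_
  simp [h]

theorem actionsCommute_iff {ω : R ⊗[k] X →ₗ[k] X} {ω' : X ⊗[k] S →ₗ[k] X} :
    ActionsCommute ω ω' ↔
      ∀ (a : R) (x : X) (b : S), ω' (ω (a ⊗ₜ x) ⊗ₜ b) = ω (a ⊗ₜ ω' (x ⊗ₜ b)) := by
  refine ⟨fun h a x b => by simpa using congr($h ((a ⊗ₜ x) ⊗ₜ b)), fun h => ?_⟩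
  refine TensorProduct.ext_threefold fun a x b => ?_
  simp [h]

theorem isLeftAction_mul' : IsLeftAction (LinearMap.mul' k R) :=
  isLeftAction_iff.2 fun a b c => by simp [mul_assoc]

theorem isRightAction_mul' : IsRightAction (LinearMap.mul' k R) :=
  isRightAction_iff.2 fun a b c => by simp [mul_assoc]

theorem actionsCommute_mul' : ActionsCommute (LinearMap.mul' k R) (LinearMap.mul' k R) :=
  actionsCommute_iff.2 fun a b c => by simp [mul_assoc]

theorem IsLeftAction.tensor {ω : R ⊗[k] X →ₗ[k] X} {ω₂ : S ⊗[k] Y →ₗ[k] Y}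
    (h : IsLeftAction ω) (h₂ : IsLeftAction ω₂) :
    IsLeftAction (map ω ω₂ ∘ₗ (tensorTensorTensorComm k R S X Y).toLinearMap) := by
  rw [isLeftAction_iff] at h h₂
  unfold IsLeftAction
  ext a a₂ b b₂ x y
  simp [h, h₂]

theorem IsRightAction.tensor {ω : X ⊗[k] R →ₗ[k] X} {ω₂ : Y ⊗[k] S →ₗ[k] Y}
    (h : IsRightAction ω) (h₂ : IsRightAction ω₂) :
    IsRightAction (map ω ω₂ ∘ₗ (tensorTensorTensorComm k X Y R S).toLinearMap) := by
  rw [isRightAction_iff] at h h₂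
  unfold IsRightAction
  ext x y a a₂ b b₂
  simp [h, h₂]

theorem ActionsCommute.tensor {R' S' : Type} [Semiring R'] [Algebra k R'] [Semiring S']
    [Algebra k S'] {ω : R ⊗[k] X →ₗ[k] X} {ω' : X ⊗[k] S →ₗ[k] X}
    {ω₂ : R' ⊗[k] Y →ₗ[k] Y} {ω₂' : Y ⊗[k] S' →ₗ[k] Y}
    (h : ActionsCommute ω ω') (h₂ : ActionsCommute ω₂ ω₂') :
    ActionsCommute (map ω ω₂ ∘ₗ (tensorTensorTensorComm k R R' X Y).toLinearMap)
      (map ω' ω₂' ∘ₗ (tensorTensorTensorComm k X Y S S').toLinearMap) := by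
  rw [actionsCommute_iff] at h h₂
  unfold ActionsCommute
  ext a a₂ x y b b₂
  simp [h, h₂]

theorem IsLeftAction.comap {ω : S ⊗[k] X →ₗ[k] X} (h : IsLeftAction ω) (φ : R →ₐ[k] S) :
    IsLeftAction (ω ∘ₗ φ.toLinearMap.rTensor X) :=
  isLeftAction_iff.2 fun a b x => by simp [isLeftAction_iff.1 h]

theorem IsRightAction.comap {ω : X ⊗[k] S →ₗ[k] X} (h : IsRightAction ω) (φ : R →ₐ[k] S) :
    IsRightAction (ω ∘ₗ φ.toLinearMap.lTensor X) :=
  isRightAction_iff.2 fun x a b => by simp [isRightAction_iff.1 h]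

theorem ActionsCommute.comap {R' S' : Type} {ω : R ⊗[k] X →ₗ[k] X} {ω' : X ⊗[k] S →ₗ[k] X}
    [Semiring R'] [Algebra k R'] [Semiring S'] [Algebra k S']
    (h : ActionsCommute ω ω') (φ : R' →ₗ[k] R) (ψ : S' →ₗ[k] S) :
    ActionsCommute (ω ∘ₗ φ.rTensor X) (ω' ∘ₗ ψ.lTensor X) :=
  actionsCommute_iff.2 fun a x b => by simp [actionsCommute_iff.1 h]

end Actions

section Diagonal

variable (k : Type) [Field k] (A : Type) [Ring A] [Bialgebra k A]
variable {N : Type} [AddCommGroup N] [Module k N]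

theorem rdiagE_zero_tmul (y : Cd k A N 0) (c : A) : rdiagE k A 0 (y ⊗ₜ c) = εA k A c • y :=
  TensorProduct.rid_tmul y (εA k A c)

theorem ldiag_isLeftAction {ωN : A ⊗[k] N →ₗ[k] N} (hN : IsLeftAction ωN) :
    ∀ p, IsLeftAction (ldiag k A ωN p)
  | 0 => hN
  | p + 1 =>
    ((ldiag_isLeftAction hN p).tensor isLeftAction_mul').comap (Bialgebra.comulAlgHom k A)

theorem rdiagE_isRightAction : ∀ p, IsRightAction (rdiagE k A (N := N) p)
  | 0 => by
    rw [isRightAction_iff]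
    intro y a b
    simp only [rdiagE_zero_tmul, smul_smul, Bialgebra.counit_mul, mul_comm]
  | p + 1 =>
    ((rdiagE_isRightAction p).tensor isRightAction_mul').comap (Bialgebra.comulAlgHom k A)

theorem ldiag_rdiagE_commute (ωN : A ⊗[k] N →ₗ[k] N) :
    ∀ p, ActionsCommute (ldiag k A ωN p) (rdiagE k A p)
  | 0 => by
    rw [actionsCommute_iff]
    intro a y b
    simp only [rdiagE_zero_tmul, tmul_smul, map_smul]
  | p + 1 => ((ldiag_rdiagE_commute ωN p).tensor actionsCommute_mul').comap (ΔA k A) (ΔA k A)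

end Diagonal

-- Tensor induction and `TensorProduct.ext_threefold` need to see `pwr (n + 1)` as `pwr n ⊗ A`.
attribute [reducible] pwr

section TensorPowers

variable (k : Type) [Field k] (A : Type) [Ring A] [Bialgebra k A]

theorem insP_succ_tmul (n : ℕ) (a : A) (x : Pk k A n) (c : A) :
    insP k A (n + 1) (a ⊗ₜ (x ⊗ₜ c)) = insP k A n (a ⊗ₜ x) ⊗ₜ c :=
  rfl

theorem mulP_succ_of_ne {n i : ℕ} (h : i ≠ n + 1) :
    mulP k A (n + 1) i = (mulP k A n i).rTensor A := by
  rw [mulP]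
  exact if_neg h

theorem mulP_succ_tmul {n i : ℕ} (h : i ≠ n + 1) (x : Pk k A (n + 1)) (c : A) :
    mulP k A (n + 1) i (x ⊗ₜ c) = mulP k A n i x ⊗ₜ c := by
  rw [mulP_succ_of_ne k A h]
  rfl

theorem mulP_succ_self_tmul (n : ℕ) (x : Pk k A n) (c d : A) :
    mulP k A (n + 1) (n + 1) ((x ⊗ₜ c) ⊗ₜ d) = x ⊗ₜ (c * d) := by
  rw [mulP, if_pos rfl]
  rfl

theorem mulP_one_insP_insP (n : ℕ) (a b : A) (x : Pk k A n) :
    mulP k A (n + 1) 1 (insP k A (n + 1) (a ⊗ₜ insP k A n (b ⊗ₜ x))) =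
      insP k A n ((a * b) ⊗ₜ x) := by
  induction n with
  | zero => exact mulP_succ_self_tmul k A 0 x a b
  | succ n ih =>
    induction x using TensorProduct.induction_on with
    | zero => simp
    | add x y hx hy => simp only [tmul_add, map_add, hx, hy]
    | tmul x c =>
      rw [insP_succ_tmul, insP_succ_tmul, mulP_succ_tmul k A (by omega), ih, insP_succ_tmul]

theorem mulP_succ_insP {n i : ℕ} (hi : 1 ≤ i) (hin : i ≤ n) (a : A) (x : Pk k A (n + 1)) :
    mulP k A (n + 1) (i + 1) (insP k A (n + 1) (a ⊗ₜ x)) =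
      insP k A n (a ⊗ₜ mulP k A n i x) := by
  induction n with
  | zero => omega
  | succ n ih =>
    induction x using TensorProduct.induction_on with
    | zero => simp
    | add x y hx hy => simp only [tmul_add, map_add, hx, hy]
    | tmul x c =>
      rcases Nat.lt_or_ge i (n + 1) with hi' | hi'
      · rw [insP_succ_tmul, mulP_succ_tmul k A (by omega), mulP_succ_tmul k A (by omega),
          ih (by omega), insP_succ_tmul]
      · obtain rfl : i = n + 1 := by omega
        induction x using TensorProduct.induction_on with
        | zero => simp
        | add x y hx hy => simp only [tmul_add, add_tmul, map_add, hx, hy]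
        | tmul x b =>
          rw [insP_succ_tmul, insP_succ_tmul, mulP_succ_self_tmul, mulP_succ_self_tmul,
            insP_succ_tmul]

theorem mulP_comp_mulP {n i j : ℕ} (hi : 1 ≤ i) (hij : i ≤ j) (hjn : j ≤ n) :
    mulP k A n i ∘ₗ mulP k A (n + 1) (j + 1) = mulP k A n j ∘ₗ mulP k A (n + 1) i := by
  induction n with
  | zero => omega
  | succ n ih =>
    rcases Nat.lt_or_ge j (n + 1) with hj | hj
    · rw [mulP_succ_of_ne k A (n := n) (i := i) (by omega),
        mulP_succ_of_ne k A (n := n + 1) (i := j + 1) (by omega),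
        mulP_succ_of_ne k A (n := n) (i := j) (by omega),
        mulP_succ_of_ne k A (n := n + 1) (i := i) (by omega),
        ← LinearMap.rTensor_comp, ← LinearMap.rTensor_comp, ih (by omega)]
    obtain rfl : j = n + 1 := by omega
    rcases Nat.lt_or_ge i (n + 1) with hi' | hi'
    · refine TensorProduct.ext_threefold fun y c d => ?_
      rw [LinearMap.comp_apply, LinearMap.comp_apply, mulP_succ_self_tmul,
        mulP_succ_tmul k A (by omega : i ≠ n + 1 + 1), mulP_succ_tmul k A (by omega : i ≠ n + 1),
        mulP_succ_tmul k A (by omega : i ≠ n + 1), mulP_succ_self_tmul]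
    · obtain rfl : i = n + 1 := by omega
      refine TensorProduct.ext_fourfold fun y b c d => ?_
      rw [LinearMap.comp_apply, LinearMap.comp_apply, mulP_succ_self_tmul,
        mulP_succ_tmul k A (by omega : n + 1 ≠ n + 1 + 1), mulP_succ_self_tmul,
        mulP_succ_self_tmul, mulP_succ_self_tmul, mul_assoc]

end TensorPowers

section Faces

variable (k : Type) [Field k] (A : Type) [Ring A] [Bialgebra k A]
variable {M N : Type} [AddCommGroup M] [Module k M] [AddCommGroup N] [Module k N]

theorem ext_insP {V : Type} [AddCommGroup V] [Module k V] {n : ℕ}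
    {F G : Dm k A M (n + 1) →ₗ[k] V}
    (h : ∀ (a : A) (x : Pk k A n) (m : M),
      F (insP k A n (a ⊗ₜ x) ⊗ₜ m) = G (insP k A n (a ⊗ₜ x) ⊗ₜ m)) :
    F = G := by
  refine TensorProduct.ext' fun z m => ?_
  obtain ⟨w, rfl⟩ := (insP k A n).surjective z
  induction w using TensorProduct.induction_on with
  | zero => simp
  | add u v hu hv => simp only [map_add, add_tmul, hu, hv]
  | tmul a x => exact h a x m

variable (ωM : A ⊗[k] M →ₗ[k] M) (ωN : A ⊗[k] N →ₗ[k] N) {n p : ℕ} (f : Yc k A M N n p)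

theorem face0_insP_tmul (a : A) (x : Pk k A n) (m : M) :
    face0 k A ωN n p f (insP k A n (a ⊗ₜ x) ⊗ₜ m) = ldiag k A ωN p (a ⊗ₜ f (x ⊗ₜ m)) := by
  simp [face0]

def twistedEval (x : Pk k A n) (m : M) : A ⊗[k] A →ₗ[k] Cd k A N p :=
  rdiagE k A p ∘ₗ (TensorProduct.comm k A (Cd k A N p)).toLinearMap ∘ₗ
    (f ∘ₗ TensorProduct.mk k (Pk k A n) M x ∘ₗ ωM ∘ₗ (TensorProduct.mk k A M).flip m).lTensor A

theorem twistedEval_tmul (x : Pk k A n) (m : M) (c₁ c₂ : A) :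
    twistedEval k A ωM f x m (c₁ ⊗ₜ c₂) = rdiagE k A p (f (x ⊗ₜ ωM (c₂ ⊗ₜ m)) ⊗ₜ c₁) :=
  rfl

theorem faceLastYD_tmul (x : Pk k A n) (c : A) (m : M) :
    faceLastYD k A ωM n p f ((x ⊗ₜ c) ⊗ₜ m) = twistedEval k A ωM f x m (ΔA k A c) := by
  simp only [faceLastYD, LinearMap.comp_apply, LinearEquiv.coe_coe, map_tmul,
    LinearMap.id_apply]
  induction ΔA k A c using TensorProduct.induction_on with
  | zero => simp
  | add u v hu hv => simp only [tmul_add, add_tmul, map_add, hu, hv]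
  | tmul c₁ c₂ => rfl

theorem faceMid_tmul (i : ℕ) (X : Pk k A (n + 1)) (m : M) :
    faceMid k A n p i f (X ⊗ₜ m) = f (mulP k A n i X ⊗ₜ m) :=
  rfl

theorem faceMid_one_face0 (hN : IsLeftAction ωN) :
    faceMid k A (n + 1) p 1 (face0 k A ωN n p f) =
      face0 k A ωN (n + 1) p (face0 k A ωN n p f) := by
  refine ext_insP k A fun a y m => ?_
  obtain ⟨w, rfl⟩ := (insP k A n).surjective y
  induction w using TensorProduct.induction_on with
  | zero => simp
  | add u v hu hv => simp only [map_add, tmul_add, add_tmul, hu, hv]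
  | tmul b x =>
    rw [faceMid_tmul, mulP_one_insP_insP, face0_insP_tmul, face0_insP_tmul, face0_insP_tmul,
      isLeftAction_iff.1 (ldiag_isLeftAction k A hN p)]

theorem faceMid_succ_face0 {j : ℕ} (hj : 1 ≤ j) (hjn : j ≤ n) :
    faceMid k A (n + 1) p (j + 1) (face0 k A ωN n p f) =
      face0 k A ωN (n + 1) p (faceMid k A n p j f) := by
  refine ext_insP k A fun a y m => ?_
  rw [faceMid_tmul, mulP_succ_insP k A hj hjn, face0_insP_tmul, face0_insP_tmul]
  rfl

theorem faceLastYD_face0 :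
    faceLastYD k A ωM (n + 1) p (face0 k A ωN n p f) =
      face0 k A ωN (n + 1) p (faceLastYD k A ωM n p f) := by
  refine ext_insP k A fun a y m => ?_
  induction y using TensorProduct.induction_on with
  | zero => simp
  | add u v hu hv => simp only [map_add, tmul_add, add_tmul, hu, hv]
  | tmul x c =>
    have hcomm : twistedEval k A ωM (face0 k A ωN n p f) (insP k A n (a ⊗ₜ x)) m =
        ldiag k A ωN p ∘ₗ TensorProduct.mk k A _ a ∘ₗ twistedEval k A ωM f x m := by
      refine TensorProduct.ext' fun c₁ c₂ => ?_
      rw [LinearMap.comp_apply, LinearMap.comp_apply, twistedEval_tmul, twistedEval_tmul,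
        face0_insP_tmul, mk_apply]
      exact actionsCommute_iff.1 (ldiag_rdiagE_commute k A ωN p) _ _ _
    rw [face0_insP_tmul, insP_succ_tmul, faceLastYD_tmul, faceLastYD_tmul, hcomm]
    rfl

theorem faceMid_succ_faceMid {i j : ℕ} (hi : 1 ≤ i) (hij : i ≤ j) (hjn : j ≤ n) :
    faceMid k A (n + 1) p (j + 1) (faceMid k A n p i f) =
      faceMid k A (n + 1) p i (faceMid k A n p j f) :=
  TensorProduct.ext' fun z m =>
    congrArg (fun y => f (y ⊗ₜ m)) (LinearMap.congr_fun (mulP_comp_mulP k A hi hij hjn) z)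

theorem faceLastYD_faceMid {i : ℕ} (hin : i ≤ n) :
    faceLastYD k A ωM (n + 1) p (faceMid k A n p i f) =
      faceMid k A (n + 1) p i (faceLastYD k A ωM n p f) := by
  refine TensorProduct.ext_threefold fun y c m => ?_
  rw [faceMid_tmul, faceLastYD_tmul, mulP_succ_tmul k A (by omega), faceLastYD_tmul]
  rfl

theorem twistedEval_mul_tmul (hM : IsLeftAction ωM) (x : Pk k A n) (m : M) (v : A ⊗[k] A)
    (d₁ d₂ : A) :
    twistedEval k A ωM f x m (v * (d₁ ⊗ₜ d₂)) =
      rdiagE k A p (twistedEval k A ωM f x (ωM (d₂ ⊗ₜ m)) v ⊗ₜ d₁) := by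
  induction v using TensorProduct.induction_on with
  | zero => simp
  | add u v hu hv => simp only [add_mul, map_add, add_tmul, hu, hv]
  | tmul c₁ c₂ =>
    rw [Algebra.TensorProduct.tmul_mul_tmul, twistedEval_tmul, twistedEval_tmul,
      isLeftAction_iff.1 hM, isRightAction_iff.1 (rdiagE_isRightAction k A p)]

theorem faceLastYD_faceLastYD (hM : IsLeftAction ωM) :
    faceLastYD k A ωM (n + 1) p (faceLastYD k A ωM n p f) =
      faceMid k A (n + 1) p (n + 1) (faceLastYD k A ωM n p f) := by
  refine TensorProduct.ext_fourfold fun x c d m => ?_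
  have hmul : twistedEval k A ωM (faceLastYD k A ωM n p f) (x ⊗ₜ c) m =
      twistedEval k A ωM f x m ∘ₗ LinearMap.mulLeft k (ΔA k A c) := by
    refine TensorProduct.ext' fun d₁ d₂ => ?_
    rw [LinearMap.comp_apply, twistedEval_tmul, faceLastYD_tmul, LinearMap.mulLeft_apply,
      twistedEval_mul_tmul k A ωM f hM]
  rw [faceMid_tmul, faceLastYD_tmul, hmul, mulP_succ_self_tmul, faceLastYD_tmul,
    Bialgebra.comul_mul]
  rfl

theorem bYD_zero : bYD k A ωM ωN n p 0 f = face0 k A ωN n p f :=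
  if_pos rfl

theorem bYD_of_le {i : ℕ} (hi : 1 ≤ i) (hin : i ≤ n) :
    bYD k A ωM ωN n p i f = faceMid k A n p i f := by
  rw [bYD, if_neg (by omega), if_pos hin]

theorem bYD_succ_self : bYD k A ωM ωN n p (n + 1) f = faceLastYD k A ωM n p f := by
  rw [bYD, if_neg (by omega), if_neg (by omega)]

end Faces

/-- The simplicial relations for the horizontal face maps of the
Yetter-Drinfel'd bicomplex: `b_j^{n+1,p} ∘ b_i^{n,p} = b_i^{n+1,p} ∘ b_{j-1}^{n,p}`
for all `0 ≤ i < j ≤ n+2`. -/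
theorem bYD_comp_rel (k : Type) [Field k] (A : Type) [Ring A] [Bialgebra k A]
    (M N : Type) [AddCommGroup M] [Module k M] [AddCommGroup N] [Module k N]
    (ωM : A ⊗[k] M →ₗ[k] M) (ρM : M →ₗ[k] M ⊗[k] A)
    (ωN : A ⊗[k] N →ₗ[k] N) (ρN : N →ₗ[k] N ⊗[k] A)
    (hM : IsYetterDrinfeld k A ωM ρM) (hN : IsYetterDrinfeld k A ωN ρN)
    (n p i j : ℕ) (hij : i < j) (hj : j ≤ n + 2) (f : Yc k A M N n p) :
    bYD k A ωM ωN (n+1) p j (bYD k A ωM ωN n p i f) =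
      bYD k A ωM ωN (n+1) p i (bYD k A ωM ωN n p (j-1) f) := by
  have hωM : IsLeftAction ωM := isLeftAction_iff.2 hM.1.2
  have hωN : IsLeftAction ωN := isLeftAction_iff.2 hN.1.2
  obtain ⟨j, rfl⟩ : ∃ j', j = j' + 1 := ⟨j - 1, by omega⟩
  rw [Nat.add_sub_cancel]
  rcases Nat.eq_zero_or_pos i with rfl | hi
  · rcases (by omega : j = 0 ∨ (1 ≤ j ∧ j ≤ n) ∨ j = n + 1) with rfl | ⟨hj₁, hjn⟩ | rfl <;>
      simp (disch := omega) only [bYD_zero, bYD_of_le, bYD_succ_self]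
    · exact faceMid_one_face0 k A ωN f hωN
    · exact faceMid_succ_face0 k A ωN f hj₁ hjn
    · exact faceLastYD_face0 k A ωM ωN f
  · rcases (by omega : j ≤ n ∨ (i ≤ n ∧ j = n + 1) ∨ (i = n + 1 ∧ j = n + 1)) with
      hjn | ⟨hin, rfl⟩ | ⟨rfl, rfl⟩ <;>
      simp (disch := omega) only [bYD_of_le, bYD_succ_self]
    · exact faceMid_succ_faceMid k A f hi (by omega) hjn
    · exact faceLastYD_faceMid k A ωM f hin
    · exact faceLastYD_faceLastYD k A ωM f hωM

end PS
end
end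

section
/- Let A be a bialgebra and M, N left-right Yetter-Drinfel'd modules over A. Given a pair (ω', ρ') ∈ Hom(A⊗M,N) ⊕ Hom(M,N⊗A), endow the k-vector space N ⊕ M with the action a·(n,m) = (a·n + ω'(a⊗m), a·m) and the coaction λ(n,m) = ρ_N(n) + ρ'(m) + ρ_M(m) ∈ (N⊗A) ⊕ (M⊗A) ≅ (N⊕M)⊗A. Then N ⊕_{(ω',ρ')} M with these structures is a left-right Yetter-Drinfel'd module over A if and only if (ω',ρ') belongs to Z^1(M,N), i.e. satisfies: (i) ω'∘(id⊗ω_M) + ω_N∘(id⊗ω') = ω'∘(μ⊗id); (ii) (ρ'⊗id)∘ρ_M + (ρ_N⊗id)∘ρ' = (id⊗Δ)∘ρ'; (iii) (ω'⊗μ)∘(id⊗τ_M⊗id)∘(Δ⊗ρ_M) + (ω_N⊗μ)∘(id⊗τ_N⊗id)∘(Δ⊗ρ') = (id⊗μ)∘(ρ'⊗id)∘τ_M∘(id⊗ω_M)∘(Δ⊗id) + (id⊗μ)∘(ρ_N⊗id)∘τ_N∘(id⊗ω')∘(Δ⊗id). -/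
open TensorProduct
noncomputable section

namespace PS

variable (k : Type) [Field k] (A : Type) [Ring A] [Bialgebra k A]

section Cocycles

variable (k : Type) [Field k] (A : Type) [Ring A] [Bialgebra k A]
variable {M N : Type} [AddCommGroup M] [Module k M] [AddCommGroup N] [Module k N]
variable (ωM : A ⊗[k] M →ₗ[k] M) (ρM : M →ₗ[k] M ⊗[k] A)
variable (ωN : A ⊗[k] N →ₗ[k] N) (ρN : N →ₗ[k] N ⊗[k] A)

/-- First 1-cocycle condition:
`ω' ∘ (id ⊗ ω_M) + ω_N ∘ (id ⊗ ω') = ω' ∘ (μ ⊗ id)` (as maps `(A ⊗ A) ⊗ M → N`). -/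
def Cocycle1 (ω' : A ⊗[k] M →ₗ[k] N) : Prop :=
  ω'.comp ((TensorProduct.map (LinearMap.id : A →ₗ[k] A) ωM).comp
      (TensorProduct.assoc k A A M).toLinearMap) +
    ωN.comp ((TensorProduct.map (LinearMap.id : A →ₗ[k] A) ω').comp
      (TensorProduct.assoc k A A M).toLinearMap) =
  ω'.comp (TensorProduct.map (μA k A) (LinearMap.id : M →ₗ[k] M))

/-- Second 1-cocycle condition:
`(ρ' ⊗ id) ∘ ρ_M + (ρ_N ⊗ id) ∘ ρ' = (id ⊗ Δ) ∘ ρ'` (as maps `M → (N ⊗ A) ⊗ A`). -/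
def Cocycle2 (ρ' : M →ₗ[k] N ⊗[k] A) : Prop :=
  (TensorProduct.map ρ' (LinearMap.id : A →ₗ[k] A)).comp ρM +
    (TensorProduct.map ρN (LinearMap.id : A →ₗ[k] A)).comp ρ' =
  ((TensorProduct.assoc k N A A).symm.toLinearMap).comp
    ((TensorProduct.map (LinearMap.id : N →ₗ[k] N) (ΔA k A)).comp ρ')

/-- `a ⊗ m ↦ Σ ω(a_1 ⊗ m_0) ⊗ a_2 m_1`, i.e. `(ω ⊗ μ) ∘ (id ⊗ τ ⊗ id) ∘ (Δ ⊗ ρ)`. -/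
def mixLHS (ω : A ⊗[k] M →ₗ[k] N) (ρ : M →ₗ[k] M ⊗[k] A) : A ⊗[k] M →ₗ[k] N ⊗[k] A :=
  (TensorProduct.map ω (μA k A)).comp <|
    ((TensorProduct.tensorTensorTensorComm k A A M A).toLinearMap).comp
      (TensorProduct.map (ΔA k A) ρ)

/-- `a ⊗ m ↦ Σ ω(a_1 ⊗ ρ'(m)-part)` : `(ω_N ⊗ μ) ∘ (id ⊗ τ_N ⊗ id) ∘ (Δ ⊗ ρ')`. -/
def mixLHS' (ω : A ⊗[k] N →ₗ[k] N) (ρ' : M →ₗ[k] N ⊗[k] A) : A ⊗[k] M →ₗ[k] N ⊗[k] A :=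
  (TensorProduct.map ω (μA k A)).comp <|
    ((TensorProduct.tensorTensorTensorComm k A A N A).toLinearMap).comp
      (TensorProduct.map (ΔA k A) ρ')

/-- `(id ⊗ μ) ∘ (ρ' ⊗ id) ∘ τ_M ∘ (id ⊗ ω) ∘ (Δ ⊗ id)`,
`a ⊗ m ↦ Σ ρ'(a_2·m)_0 ⊗ ρ'(a_2·m)_1 a_1`. -/
def mixRHS (ω : A ⊗[k] M →ₗ[k] M) (ρ' : M →ₗ[k] N ⊗[k] A) : A ⊗[k] M →ₗ[k] N ⊗[k] A :=
  (TensorProduct.map (LinearMap.id : N →ₗ[k] N) (μA k A)).comp <|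
    ((TensorProduct.assoc k N A A).toLinearMap).comp <|
      (TensorProduct.map ρ' (LinearMap.id : A →ₗ[k] A)).comp <|
        ((TensorProduct.comm k A M).toLinearMap).comp <|
          (TensorProduct.map (LinearMap.id : A →ₗ[k] A) ω).comp <|
            ((TensorProduct.assoc k A A M).toLinearMap).comp
              (TensorProduct.map (ΔA k A) (LinearMap.id : M →ₗ[k] M))

/-- `(id ⊗ μ) ∘ (ρ_N ⊗ id) ∘ τ_N ∘ (id ⊗ ω') ∘ (Δ ⊗ id)`. -/
def mixRHS' (ω' : A ⊗[k] M →ₗ[k] N) (ρ : N →ₗ[k] N ⊗[k] A) : A ⊗[k] M →ₗ[k] N ⊗[k] A :=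
  (TensorProduct.map (LinearMap.id : N →ₗ[k] N) (μA k A)).comp <|
    ((TensorProduct.assoc k N A A).toLinearMap).comp <|
      (TensorProduct.map ρ (LinearMap.id : A →ₗ[k] A)).comp <|
        ((TensorProduct.comm k A N).toLinearMap).comp <|
          (TensorProduct.map (LinearMap.id : A →ₗ[k] A) ω').comp <|
            ((TensorProduct.assoc k A A M).toLinearMap).comp
              (TensorProduct.map (ΔA k A) (LinearMap.id : M →ₗ[k] M))

/-- Third 1-cocycle condition in the Yetter-Drinfel'd case. -/
def Cocycle3YD (ω' : A ⊗[k] M →ₗ[k] N) (ρ' : M →ₗ[k] N ⊗[k] A) : Prop :=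
  mixLHS k A ω' ρM + mixLHS' k A ωN ρ' = mixRHS k A ωM ρ' + mixRHS' k A ω' ρN

/-- Third 1-cocycle condition in the Hopf-module case. -/
def Cocycle3H (ω' : A ⊗[k] M →ₗ[k] N) (ρ' : M →ₗ[k] N ⊗[k] A) : Prop :=
  mixLHS k A ω' ρM + mixLHS' k A ωN ρ' = ρ'.comp ωM + ρN.comp ω'

/-- `Z^1(M,N)` for Yetter-Drinfel'd modules. -/
def Z1YD (ω' : A ⊗[k] M →ₗ[k] N) (ρ' : M →ₗ[k] N ⊗[k] A) : Prop :=
  Cocycle1 k A ωM ωN ω' ∧ Cocycle2 k A ρM ρN ρ' ∧ Cocycle3YD k A ωM ρM ωN ρN ω' ρ'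

/-- `Z^1(M,N)` for Hopf modules. -/
def Z1H (ω' : A ⊗[k] M →ₗ[k] N) (ρ' : M →ₗ[k] N ⊗[k] A) : Prop :=
  Cocycle1 k A ωM ωN ω' ∧ Cocycle2 k A ρM ρN ρ' ∧ Cocycle3H k A ωM ρM ωN ρN ω' ρ'

/-- `B^1(M,N)`: the pair is `(d_m(f), d_c(f))` for some `f : M → N`. -/
def B1 (ω' : A ⊗[k] M →ₗ[k] N) (ρ' : M →ₗ[k] N ⊗[k] A) : Prop :=
  ∃ f : M →ₗ[k] N,
    ω' = ωN.comp (TensorProduct.map (LinearMap.id : A →ₗ[k] A) f) - f.comp ωM ∧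
    ρ' = ρN.comp f - (TensorProduct.map f (LinearMap.id : A →ₗ[k] A)).comp ρM

/-- The action of the extension `N ⊕_{(ω',ρ')} M`: `a·(n,m) = (a·n + ω'(a⊗m), a·m)`. -/
def sumAct (ω' : A ⊗[k] M →ₗ[k] N) : A ⊗[k] (N × M) →ₗ[k] N × M :=
  LinearMap.prod
    (ωN.comp (TensorProduct.map (LinearMap.id : A →ₗ[k] A) (LinearMap.fst k N M)) +
      ω'.comp (TensorProduct.map (LinearMap.id : A →ₗ[k] A) (LinearMap.snd k N M)))
    (ωM.comp (TensorProduct.map (LinearMap.id : A →ₗ[k] A) (LinearMap.snd k N M)))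

/-- The coaction of the extension `N ⊕_{(ω',ρ')} M`:
`λ(n,m) = ρ_N(n) + ρ'(m) + ρ_M(m)`. -/
def sumCo (ρ' : M →ₗ[k] N ⊗[k] A) : (N × M) →ₗ[k] (N × M) ⊗[k] A :=
  (TensorProduct.map (LinearMap.inl k N M) (LinearMap.id : A →ₗ[k] A)).comp
      (ρN.comp (LinearMap.fst k N M)) +
    (TensorProduct.map (LinearMap.inl k N M) (LinearMap.id : A →ₗ[k] A)).comp
      (ρ'.comp (LinearMap.snd k N M)) +
    (TensorProduct.map (LinearMap.inr k N M) (LinearMap.id : A →ₗ[k] A)).comp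
      (ρM.comp (LinearMap.snd k N M))

/-- A linear map is a morphism for the given module/comodule structures. -/
def IsBicompatHom {X Y : Type} [AddCommGroup X] [Module k X] [AddCommGroup Y] [Module k Y]
    (ωX : A ⊗[k] X →ₗ[k] X) (ρX : X →ₗ[k] X ⊗[k] A)
    (ωY : A ⊗[k] Y →ₗ[k] Y) (ρY : Y →ₗ[k] Y ⊗[k] A) (f : X →ₗ[k] Y) : Prop :=
  f.comp ωX = ωY.comp (TensorProduct.map (LinearMap.id : A →ₗ[k] A) f) ∧
    ρY.comp f = (TensorProduct.map f (LinearMap.id : A →ₗ[k] A)).comp ρX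

end Cocycles


section Helper

open TensorProduct LinearMap

variable {k : Type} [Field k] {A : Type} [Ring A] [Bialgebra k A]

theorem map_map_apply {X Y Z P Q R : Type} [AddCommGroup X] [Module k X] [AddCommGroup Y]
    [Module k Y] [AddCommGroup Z] [Module k Z] [AddCommGroup P] [Module k P] [AddCommGroup Q]
    [Module k Q] [AddCommGroup R] [Module k R]
    (f : X →ₗ[k] Y) (f' : Y →ₗ[k] Z) (g : P →ₗ[k] Q) (g' : Q →ₗ[k] R) (y : X ⊗[k] P) :
    TensorProduct.map f' g' (TensorProduct.map f g y) =
      TensorProduct.map (f' ∘ₗ f) (g' ∘ₗ g) y := by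
  rw [← LinearMap.comp_apply, ← TensorProduct.map_comp]

/-- The "kill the rightmost `A` by the counit" map. -/
def cE (X : Type) [AddCommGroup X] [Module k X] : X ⊗[k] A →ₗ[k] X :=
  (TensorProduct.rid k X).toLinearMap ∘ₗ TensorProduct.map LinearMap.id (εA k A)

theorem cE_nat {X Y : Type} [AddCommGroup X] [Module k X] [AddCommGroup Y] [Module k Y]
    (f : X →ₗ[k] Y) (y : X ⊗[k] A) :
    cE (k := k) (A := A) Y (TensorProduct.map f LinearMap.id y) = f (cE X y) := by
  induction y using TensorProduct.induction_on with
  | zero => simp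
  | tmul x a => simp [cE]
  | add u v hu hv => simp [map_add, hu, hv]

theorem cE_assoc_symm {X : Type} [AddCommGroup X] [Module k X] (y : X ⊗[k] (A ⊗[k] A)) :
    cE (k := k) (A := A) (X ⊗[k] A) ((TensorProduct.assoc k X A A).symm y) =
      TensorProduct.map LinearMap.id (cE A) y := by
  induction y using TensorProduct.induction_on with
  | zero => simp
  | tmul x c =>
      induction c using TensorProduct.induction_on with
      | zero => simp
      | tmul a b => simp [cE, tmul_smul]
      | add u v hu hv => simp only [tmul_add, map_add, hu, hv]
  | add u v hu hv => simp [map_add, hu, hv]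

theorem cE_comul : cE (k := k) A ∘ₗ ΔA k A = LinearMap.id := by
  apply LinearMap.ext
  intro a
  have h := Coalgebra.lTensor_counit_comul (R := k) a
  simp only [cE, LinearMap.comp_apply]
  have : TensorProduct.map (LinearMap.id : A →ₗ[k] A) (εA k A) ((ΔA k A) a) = a ⊗ₜ[k] 1 := by
    simpa [LinearMap.lTensor] using h
  rw [this]
  simp

/-- Evaluator for the `ydLHS`/`mixRHS` pattern, with the comultiplication output abstracted. -/
def Tc {Z X : Type} [AddCommGroup Z] [Module k Z] [AddCommGroup X] [Module k X]
    (h : A ⊗[k] X →ₗ[k] Z ⊗[k] A) : (A ⊗[k] A) ⊗[k] X →ₗ[k] Z ⊗[k] A :=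
  TensorProduct.map LinearMap.id (μA k A) ∘ₗ
    (TensorProduct.assoc k Z A A).toLinearMap ∘ₗ
      (TensorProduct.comm k A (Z ⊗[k] A)).toLinearMap ∘ₗ
        TensorProduct.map LinearMap.id h ∘ₗ (TensorProduct.assoc k A A X).toLinearMap

theorem Tc_tmul {Z X : Type} [AddCommGroup Z] [Module k Z] [AddCommGroup X] [Module k X]
    (h : A ⊗[k] X →ₗ[k] Z ⊗[k] A) (a b : A) (x : X) :
    Tc h ((a ⊗ₜ[k] b) ⊗ₜ[k] x) =
      TensorProduct.map LinearMap.id (μA k A)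
        ((TensorProduct.assoc k Z A A) ((h (b ⊗ₜ x)) ⊗ₜ a)) := by
  simp [Tc]

theorem Tc_post {Z Z' X : Type} [AddCommGroup Z] [Module k Z] [AddCommGroup Z'] [Module k Z']
    [AddCommGroup X] [Module k X] (p : Z →ₗ[k] Z') (h : A ⊗[k] X →ₗ[k] Z ⊗[k] A)
    (c : A ⊗[k] A) (x : X) :
    Tc (TensorProduct.map p LinearMap.id ∘ₗ h) (c ⊗ₜ x) =
      TensorProduct.map p LinearMap.id (Tc h (c ⊗ₜ x)) := by
  induction c using TensorProduct.induction_on with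
  | zero => simp [add_tmul]
  | tmul a b =>
      rw [Tc_tmul, Tc_tmul, LinearMap.comp_apply]
      generalize h (b ⊗ₜ x) = y
      induction y using TensorProduct.induction_on with
      | zero => simp
      | tmul z e => simp
      | add u v hu hv => simp only [map_add, add_tmul, hu, hv]
  | add u v hu hv => simp only [add_tmul, map_add, hu, hv]

theorem Tc_pre {Z X X' : Type} [AddCommGroup Z] [Module k Z] [AddCommGroup X] [Module k X]
    [AddCommGroup X'] [Module k X'] (q : X →ₗ[k] X') (h : A ⊗[k] X' →ₗ[k] Z ⊗[k] A)
    (c : A ⊗[k] A) (x : X) :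
    Tc (h ∘ₗ TensorProduct.map LinearMap.id q) (c ⊗ₜ x) = Tc h (c ⊗ₜ q x) := by
  induction c using TensorProduct.induction_on with
  | zero => simp [add_tmul]
  | tmul a b => rw [Tc_tmul, Tc_tmul]; simp
  | add u v hu hv => simp only [add_tmul, map_add, hu, hv]

theorem Tc_add {Z X : Type} [AddCommGroup Z] [Module k Z] [AddCommGroup X] [Module k X]
    (h g : A ⊗[k] X →ₗ[k] Z ⊗[k] A) (c : A ⊗[k] A) (x : X) :
    Tc (h + g) (c ⊗ₜ x) = Tc h (c ⊗ₜ x) + Tc g (c ⊗ₜ x) := by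
  induction c using TensorProduct.induction_on with
  | zero => simp [add_tmul]
  | tmul a b => rw [Tc_tmul, Tc_tmul, Tc_tmul]; simp [tmul_add, add_tmul]
  | add u v hu hv =>
      simp only [add_tmul, map_add, hu, hv]
      abel

/-- Evaluator for the `hopfRHS`/`mixLHS` pattern. -/
def Hc {W Z : Type} [AddCommGroup W] [Module k W] [AddCommGroup Z] [Module k Z]
    (f : A ⊗[k] W →ₗ[k] Z) : (A ⊗[k] A) ⊗[k] (W ⊗[k] A) →ₗ[k] Z ⊗[k] A :=
  TensorProduct.map f (μA k A) ∘ₗ (TensorProduct.tensorTensorTensorComm k A A W A).toLinearMap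

theorem Hc_post {W Z Z' : Type} [AddCommGroup W] [Module k W] [AddCommGroup Z] [Module k Z]
    [AddCommGroup Z'] [Module k Z'] (p : Z →ₗ[k] Z') (f : A ⊗[k] W →ₗ[k] Z)
    (v : (A ⊗[k] A) ⊗[k] (W ⊗[k] A)) :
    Hc (p ∘ₗ f) v = TensorProduct.map p LinearMap.id (Hc f v) := by
  simp only [Hc, LinearMap.comp_apply, map_map_apply, LinearMap.id_comp]

theorem Hc_pre {W W' Z : Type} [AddCommGroup W] [Module k W] [AddCommGroup W'] [Module k W']
    [AddCommGroup Z] [Module k Z] (p : W →ₗ[k] W') (f : A ⊗[k] W' →ₗ[k] Z)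
    (c : A ⊗[k] A) (y : W ⊗[k] A) :
    Hc (f ∘ₗ TensorProduct.map LinearMap.id p) (c ⊗ₜ y) =
      Hc f (c ⊗ₜ TensorProduct.map p LinearMap.id y) := by
  induction c using TensorProduct.induction_on with
  | zero => simp [add_tmul]
  | tmul a b =>
      induction y using TensorProduct.induction_on with
      | zero => simp
      | tmul w d => simp [Hc]
      | add u v hu hv => simp only [tmul_add, map_add, hu, hv]
  | add u v hu hv => simp only [add_tmul, map_add, hu, hv]

theorem Hc_add {W Z : Type} [AddCommGroup W] [Module k W] [AddCommGroup Z] [Module k Z]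
    (f g : A ⊗[k] W →ₗ[k] Z) (v : (A ⊗[k] A) ⊗[k] (W ⊗[k] A)) :
    Hc (f + g) v = Hc f v + Hc g v := by
  simp only [Hc, LinearMap.comp_apply, TensorProduct.map_add_left, LinearMap.add_apply]

end Helper


section Helper2

open TensorProduct LinearMap

variable {k : Type} [Field k] {A : Type} [Ring A] [Bialgebra k A]
variable {M N : Type} [AddCommGroup M] [Module k M] [AddCommGroup N] [Module k N]

theorem ydLHS_apply (ω : A ⊗[k] M →ₗ[k] M) (ρ : M →ₗ[k] M ⊗[k] A) (a : A) (x : M) :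
    ydLHS k A ω ρ (a ⊗ₜ x) = Tc (ρ ∘ₗ ω) ((ΔA k A) a ⊗ₜ x) := by
  simp [ydLHS, Tc]

theorem mixRHS_apply (ω : A ⊗[k] M →ₗ[k] M) (ρ' : M →ₗ[k] N ⊗[k] A) (a : A) (m : M) :
    mixRHS k A ω ρ' (a ⊗ₜ m) = Tc (ρ' ∘ₗ ω) ((ΔA k A) a ⊗ₜ m) := by
  have key : ∀ c : A ⊗[k] A,
      TensorProduct.map (LinearMap.id : N →ₗ[k] N) (μA k A)
        ((TensorProduct.assoc k N A A)
          ((TensorProduct.map ρ' LinearMap.id)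
            ((TensorProduct.comm k A M)
              ((TensorProduct.map LinearMap.id ω)
                ((TensorProduct.assoc k A A M) (c ⊗ₜ m)))))) = Tc (ρ' ∘ₗ ω) (c ⊗ₜ m) := by
    intro c
    induction c using TensorProduct.induction_on with
    | zero => simp [zero_tmul]
    | tmul a b => rw [Tc_tmul]; simp
    | add u v hu hv => simp only [add_tmul, map_add, hu, hv]
  simpa [mixRHS] using key ((ΔA k A) a)

theorem mixRHS'_apply (ω' : A ⊗[k] M →ₗ[k] N) (ρ : N →ₗ[k] N ⊗[k] A) (a : A) (m : M) :
    mixRHS' k A ω' ρ (a ⊗ₜ m) = Tc (ρ ∘ₗ ω') ((ΔA k A) a ⊗ₜ m) := by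
  have key : ∀ c : A ⊗[k] A,
      TensorProduct.map (LinearMap.id : N →ₗ[k] N) (μA k A)
        ((TensorProduct.assoc k N A A)
          ((TensorProduct.map ρ LinearMap.id)
            ((TensorProduct.comm k A N)
              ((TensorProduct.map LinearMap.id ω')
                ((TensorProduct.assoc k A A M) (c ⊗ₜ m)))))) = Tc (ρ ∘ₗ ω') (c ⊗ₜ m) := by
    intro c
    induction c using TensorProduct.induction_on with
    | zero => simp [zero_tmul]
    | tmul a b => rw [Tc_tmul]; simp
    | add u v hu hv => simp only [add_tmul, map_add, hu, hv]
  simpa [mixRHS'] using key ((ΔA k A) a)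

theorem hopfRHS_apply (ω : A ⊗[k] M →ₗ[k] M) (ρ : M →ₗ[k] M ⊗[k] A) (a : A) (x : M) :
    hopfRHS k A ω ρ (a ⊗ₜ x) = Hc ω ((ΔA k A) a ⊗ₜ ρ x) := by
  simp [hopfRHS, Hc]

theorem mixLHS_apply (ω : A ⊗[k] M →ₗ[k] N) (ρ : M →ₗ[k] M ⊗[k] A) (a : A) (m : M) :
    mixLHS k A ω ρ (a ⊗ₜ m) = Hc ω ((ΔA k A) a ⊗ₜ ρ m) := by
  simp [mixLHS, Hc]

theorem mixLHS'_apply (ω : A ⊗[k] N →ₗ[k] N) (ρ' : M →ₗ[k] N ⊗[k] A) (a : A) (m : M) :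
    mixLHS' k A ω ρ' (a ⊗ₜ m) = Hc ω ((ΔA k A) a ⊗ₜ ρ' m) := by
  simp [mixLHS', Hc]

variable (ωM : A ⊗[k] M →ₗ[k] M) (ρM : M →ₗ[k] M ⊗[k] A)
variable (ωN : A ⊗[k] N →ₗ[k] N) (ρN : N →ₗ[k] N ⊗[k] A)
variable (ω' : A ⊗[k] M →ₗ[k] N) (ρ' : M →ₗ[k] N ⊗[k] A)

theorem sumAct_tmul (a : A) (n : N) (m : M) :
    sumAct k A ωM ωN ω' (a ⊗ₜ (n, m)) = (ωN (a ⊗ₜ n) + ω' (a ⊗ₜ m), ωM (a ⊗ₜ m)) := by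
  simp [sumAct]

theorem sumCo_apply (n : N) (m : M) :
    sumCo k A ρM ρN ρ' (n, m) =
      TensorProduct.map (inl k N M) LinearMap.id (ρN n) +
        TensorProduct.map (inl k N M) LinearMap.id (ρ' m) +
          TensorProduct.map (inr k N M) LinearMap.id (ρM m) := by
  simp [sumCo]

theorem sumAct_inl :
    sumAct k A ωM ωN ω' ∘ₗ TensorProduct.map LinearMap.id (inl k N M) = inl k N M ∘ₗ ωN := by
  apply TensorProduct.ext'
  intro a n
  simp [sumAct, tmul_zero]

theorem sumAct_inr :
    sumAct k A ωM ωN ω' ∘ₗ TensorProduct.map LinearMap.id (inr k N M) =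
      inl k N M ∘ₗ ω' + inr k N M ∘ₗ ωM := by
  apply TensorProduct.ext'
  intro a m
  simp [sumAct, tmul_zero]

theorem sumCo_inl :
    sumCo k A ρM ρN ρ' ∘ₗ inl k N M = TensorProduct.map (inl k N M) LinearMap.id ∘ₗ ρN := by
  apply LinearMap.ext
  intro n
  simp [sumCo]

theorem sumCo_inr :
    sumCo k A ρM ρN ρ' ∘ₗ inr k N M =
      TensorProduct.map (inl k N M) LinearMap.id ∘ₗ ρ' +
        TensorProduct.map (inr k N M) LinearMap.id ∘ₗ ρM := by
  apply LinearMap.ext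
  intro m
  simp [sumCo]

theorem ydsum_apply (a : A) (n : N) (m : M) :
    ydLHS k A (sumAct k A ωM ωN ω') (sumCo k A ρM ρN ρ') (a ⊗ₜ (n, m)) =
      TensorProduct.map (inl k N M) LinearMap.id
        (ydLHS k A ωN ρN (a ⊗ₜ n) + mixRHS' k A ω' ρN (a ⊗ₜ m) + mixRHS k A ωM ρ' (a ⊗ₜ m)) +
      TensorProduct.map (inr k N M) LinearMap.id (ydLHS k A ωM ρM (a ⊗ₜ m)) := by
  have hx : ((n, m) : N × M) = inl k N M n + inr k N M m := by simp
  rw [ydLHS_apply, hx, tmul_add, map_add]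
  rw [← Tc_pre (inl k N M), ← Tc_pre (inr k N M)]
  have e1 : (sumCo k A ρM ρN ρ' ∘ₗ sumAct k A ωM ωN ω') ∘ₗ
      TensorProduct.map LinearMap.id (inl k N M) =
      TensorProduct.map (inl k N M) LinearMap.id ∘ₗ (ρN ∘ₗ ωN) := by
    rw [LinearMap.comp_assoc, sumAct_inl, ← LinearMap.comp_assoc, sumCo_inl,
      LinearMap.comp_assoc]
  have e2 : (sumCo k A ρM ρN ρ' ∘ₗ sumAct k A ωM ωN ω') ∘ₗ
      TensorProduct.map LinearMap.id (inr k N M) =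
      TensorProduct.map (inl k N M) LinearMap.id ∘ₗ (ρN ∘ₗ ω') +
        (TensorProduct.map (inl k N M) LinearMap.id ∘ₗ (ρ' ∘ₗ ωM) +
          TensorProduct.map (inr k N M) LinearMap.id ∘ₗ (ρM ∘ₗ ωM)) := by
    rw [LinearMap.comp_assoc, sumAct_inr, LinearMap.comp_add, ← LinearMap.comp_assoc,
      ← LinearMap.comp_assoc, sumCo_inl, sumCo_inr, LinearMap.add_comp]
    simp only [LinearMap.comp_assoc]
  rw [e1, e2, Tc_post, ← ydLHS_apply, Tc_add, Tc_add, Tc_post, Tc_post, Tc_post,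
    ← mixRHS'_apply, ← mixRHS_apply, ← ydLHS_apply]
  simp only [map_add]
  abel

theorem hopfsum_apply (a : A) (n : N) (m : M) :
    hopfRHS k A (sumAct k A ωM ωN ω') (sumCo k A ρM ρN ρ') (a ⊗ₜ (n, m)) =
      TensorProduct.map (inl k N M) LinearMap.id
        (hopfRHS k A ωN ρN (a ⊗ₜ n) + mixLHS' k A ωN ρ' (a ⊗ₜ m) + mixLHS k A ω' ρM (a ⊗ₜ m)) +
      TensorProduct.map (inr k N M) LinearMap.id (hopfRHS k A ωM ρM (a ⊗ₜ m)) := by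
  rw [hopfRHS_apply, sumCo_apply, tmul_add, tmul_add, map_add, map_add]
  rw [← Hc_pre (inl k N M), ← Hc_pre (inl k N M) (y := ρ' m), ← Hc_pre (inr k N M),
    sumAct_inl, sumAct_inr]
  rw [Hc_post, Hc_post, Hc_add, Hc_post, Hc_post]
  rw [← hopfRHS_apply, ← mixLHS'_apply, ← mixLHS_apply, ← hopfRHS_apply]
  simp only [map_add]
  abel

end Helper2


section Equivs

open TensorProduct LinearMap

variable {k : Type} [Field k] {A : Type} [Ring A] [Bialgebra k A]
variable {M N : Type} [AddCommGroup M] [Module k M] [AddCommGroup N] [Module k N]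
variable (ωM : A ⊗[k] M →ₗ[k] M) (ρM : M →ₗ[k] M ⊗[k] A)
variable (ωN : A ⊗[k] N →ₗ[k] N) (ρN : N →ₗ[k] N ⊗[k] A)
variable (ω' : A ⊗[k] M →ₗ[k] N) (ρ' : M →ₗ[k] N ⊗[k] A)

theorem projInl (y : N ⊗[k] A) :
    TensorProduct.map (fst k N M) LinearMap.id
      (TensorProduct.map (inl k N M) LinearMap.id y) = y := by
  rw [map_map_apply]
  simp

theorem projInr0 (y : M ⊗[k] A) :
    TensorProduct.map (fst k N M) LinearMap.id
      (TensorProduct.map (inr k N M) LinearMap.id y) = 0 := by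
  rw [map_map_apply]
  simp [TensorProduct.map_zero_left]

theorem cocycle1_pt (hc : Cocycle1 k A ωM ωN ω') (a b : A) (m : M) :
    ω' (a ⊗ₜ ωM (b ⊗ₜ m)) + ωN (a ⊗ₜ ω' (b ⊗ₜ m)) = ω' ((a * b) ⊗ₜ m) := by
  have := LinearMap.congr_fun hc ((a ⊗ₜ b) ⊗ₜ m)
  simpa using this

theorem mod_iff (hMm : IsModule k A ωM) (hNm : IsModule k A ωN) :
    IsModule k A (sumAct k A ωM ωN ω') ↔ Cocycle1 k A ωM ωN ω' := by
  constructor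
  · rintro ⟨_, ha⟩
    unfold Cocycle1
    apply TensorProduct.ext_threefold
    intro a b m
    have h := ha a b ((0 : N), m)
    simp only [sumAct_tmul, tmul_zero, map_zero, zero_add] at h
    rw [Prod.mk.injEq] at h
    obtain ⟨h1, -⟩ := h
    simp only [LinearMap.add_apply, LinearMap.comp_apply, LinearEquiv.coe_coe,
      TensorProduct.assoc_tmul, TensorProduct.map_tmul, LinearMap.id_coe, id_eq,
      LinearMap.mul'_apply]
    rw [add_comm]
    exact h1
  · intro hc
    have hpt := cocycle1_pt ωM ωN ω' hc
    have he : ∀ m : M, ω' ((1 : A) ⊗ₜ m) = 0 := by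
      intro m
      have h := hpt 1 1 m
      rw [hMm.1, one_mul, hNm.1] at h
      have h0 : ω' ((1 : A) ⊗ₜ m) = ω' ((1 : A) ⊗ₜ m) - ω' ((1 : A) ⊗ₜ m) :=
        eq_sub_of_add_eq h
      simpa using h0
    constructor
    · rintro ⟨n, m⟩
      rw [sumAct_tmul, hMm.1, hNm.1, he, add_zero]
    · rintro a b ⟨n, m⟩
      simp only [sumAct_tmul]
      refine Prod.ext ?_ ?_
      · show ωN (a ⊗ₜ (ωN (b ⊗ₜ n) + ω' (b ⊗ₜ m))) + ω' (a ⊗ₜ ωM (b ⊗ₜ m)) =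
          ωN ((a * b) ⊗ₜ n) + ω' ((a * b) ⊗ₜ m)
        rw [tmul_add, map_add, hNm.2, add_assoc]
        congr 1
        rw [add_comm]
        exact hpt a b m
      · exact hMm.2 a b m


theorem assocSymm_nat {X Y : Type} [AddCommGroup X] [Module k X] [AddCommGroup Y] [Module k Y]
    (f : X →ₗ[k] Y) (y : X ⊗[k] (A ⊗[k] A)) :
    (TensorProduct.assoc k Y A A).symm (TensorProduct.map f LinearMap.id y) =
      TensorProduct.map (TensorProduct.map f LinearMap.id) LinearMap.id
        ((TensorProduct.assoc k X A A).symm y) := by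
  induction y using TensorProduct.induction_on with
  | zero => simp
  | tmul x c =>
      induction c using TensorProduct.induction_on with
      | zero => simp
      | tmul a b => simp
      | add u v hu hv => simp only [tmul_add, map_add, hu, hv]
  | add u v hu hv => simp only [map_add, hu, hv]

theorem swapMap {X Y : Type} [AddCommGroup X] [Module k X] [AddCommGroup Y] [Module k Y]
    (f : X →ₗ[k] Y) (y : X ⊗[k] A) :
    TensorProduct.map LinearMap.id (ΔA k A) (TensorProduct.map f LinearMap.id y) =
      TensorProduct.map f LinearMap.id (TensorProduct.map LinearMap.id (ΔA k A) y) := by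
  simp [map_map_apply]

theorem projJ1 (z : (N ⊗[k] A) ⊗[k] A) :
    TensorProduct.map (TensorProduct.map (fst k N M) LinearMap.id) LinearMap.id
      (TensorProduct.map (TensorProduct.map (inl k N M) LinearMap.id) LinearMap.id z) = z := by
  rw [map_map_apply, ← TensorProduct.map_comp]
  simp

theorem projJ2 (z : (M ⊗[k] A) ⊗[k] A) :
    TensorProduct.map (TensorProduct.map (fst k N M) LinearMap.id) LinearMap.id
      (TensorProduct.map (TensorProduct.map (inr k N M) LinearMap.id) LinearMap.id z) = 0 := by
  rw [map_map_apply, ← TensorProduct.map_comp]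
  simp [TensorProduct.map_zero_left]

theorem comod_iff (hMc : IsComodule k A ρM) (hNc : IsComodule k A ρN) :
    IsComodule k A (sumCo k A ρM ρN ρ') ↔ Cocycle2 k A ρM ρN ρ' := by
  have hMcu : ∀ x : M, cE M (ρM x) = x := fun x => by
    have := LinearMap.congr_fun hMc.1 x; simpa [cE] using this
  have hNcu : ∀ x : N, cE N (ρN x) = x := fun x => by
    have := LinearMap.congr_fun hNc.1 x; simpa [cE] using this
  have hMca : ∀ x : M, TensorProduct.map ρM LinearMap.id (ρM x) =
      (TensorProduct.assoc k M A A).symm (TensorProduct.map LinearMap.id (ΔA k A) (ρM x)) :=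
    fun x => by have := LinearMap.congr_fun hMc.2 x; simpa using this
  have hNca : ∀ x : N, TensorProduct.map ρN LinearMap.id (ρN x) =
      (TensorProduct.assoc k N A A).symm (TensorProduct.map LinearMap.id (ΔA k A) (ρN x)) :=
    fun x => by have := LinearMap.congr_fun hNc.2 x; simpa using this
  have exp1 : ∀ y : N ⊗[k] A,
      TensorProduct.map (sumCo k A ρM ρN ρ') LinearMap.id
          (TensorProduct.map (inl k N M) LinearMap.id y) =
        TensorProduct.map (TensorProduct.map (inl k N M) LinearMap.id) LinearMap.id
          (TensorProduct.map ρN LinearMap.id y) := by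
    intro y
    rw [map_map_apply, sumCo_inl, map_map_apply]
  have exp2 : ∀ y : M ⊗[k] A,
      TensorProduct.map (sumCo k A ρM ρN ρ') LinearMap.id
          (TensorProduct.map (inr k N M) LinearMap.id y) =
        TensorProduct.map (TensorProduct.map (inl k N M) LinearMap.id) LinearMap.id
            (TensorProduct.map ρ' LinearMap.id y) +
          TensorProduct.map (TensorProduct.map (inr k N M) LinearMap.id) LinearMap.id
            (TensorProduct.map ρM LinearMap.id y) := by
    intro y
    rw [map_map_apply, sumCo_inr, TensorProduct.map_add_left, LinearMap.add_apply,
      map_map_apply, map_map_apply]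
  have co_l : ∀ (n : N) (m : M),
      TensorProduct.map (sumCo k A ρM ρN ρ') LinearMap.id (sumCo k A ρM ρN ρ' (n, m)) =
        TensorProduct.map (TensorProduct.map (inl k N M) LinearMap.id) LinearMap.id
            (TensorProduct.map ρN LinearMap.id (ρN n)) +
          (TensorProduct.map (TensorProduct.map (inl k N M) LinearMap.id) LinearMap.id
              (TensorProduct.map ρN LinearMap.id (ρ' m)) +
            (TensorProduct.map (TensorProduct.map (inl k N M) LinearMap.id) LinearMap.id
                (TensorProduct.map ρ' LinearMap.id (ρM m)) +
              TensorProduct.map (TensorProduct.map (inr k N M) LinearMap.id) LinearMap.id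
                (TensorProduct.map ρM LinearMap.id (ρM m)))) := by
    intro n m
    rw [sumCo_apply, map_add, map_add, exp1, exp1, exp2]
    abel
  have co_r : ∀ (n : N) (m : M),
      (TensorProduct.assoc k (N × M) A A).symm
          (TensorProduct.map LinearMap.id (ΔA k A) (sumCo k A ρM ρN ρ' (n, m))) =
        TensorProduct.map (TensorProduct.map (inl k N M) LinearMap.id) LinearMap.id
            ((TensorProduct.assoc k N A A).symm
              (TensorProduct.map LinearMap.id (ΔA k A) (ρN n))) +
          (TensorProduct.map (TensorProduct.map (inl k N M) LinearMap.id) LinearMap.id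
              ((TensorProduct.assoc k N A A).symm
                (TensorProduct.map LinearMap.id (ΔA k A) (ρ' m))) +
            TensorProduct.map (TensorProduct.map (inr k N M) LinearMap.id) LinearMap.id
              ((TensorProduct.assoc k M A A).symm
                (TensorProduct.map LinearMap.id (ΔA k A) (ρM m)))) := by
    intro n m
    rw [sumCo_apply]
    simp only [map_add, swapMap, assocSymm_nat]
    abel
  constructor
  · rintro ⟨-, hca⟩
    unfold Cocycle2
    apply LinearMap.ext
    intro m
    have h := LinearMap.congr_fun hca ((0 : N), m)
    simp only [LinearMap.comp_apply, LinearEquiv.coe_coe] at h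
    rw [co_l, co_r] at h
    simp only [map_zero, zero_add] at h
    have h2 := congrArg (TensorProduct.map
      (TensorProduct.map (fst k N M) (LinearMap.id : A →ₗ[k] A)) (LinearMap.id : A →ₗ[k] A)) h
    simp only [map_add, projJ1, projJ2, add_zero] at h2
    simp only [LinearMap.add_apply, LinearMap.comp_apply, LinearEquiv.coe_coe]
    rw [add_comm]
    exact h2
  · intro hc2
    have hc2p : ∀ m : M,
        TensorProduct.map ρ' LinearMap.id (ρM m) + TensorProduct.map ρN LinearMap.id (ρ' m) =
          (TensorProduct.assoc k N A A).symm
            (TensorProduct.map LinearMap.id (ΔA k A) (ρ' m)) := fun m => by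
      have := LinearMap.congr_fun hc2 m; simpa using this
    have E0 : ∀ m : M, cE N (ρ' m) = 0 := by
      intro m
      have h := congrArg (cE (N ⊗[k] A)) (hc2p m)
      rw [map_add, cE_nat, cE_nat, hMcu, cE_assoc_symm, map_map_apply, cE_comul] at h
      simp only [LinearMap.id_comp, TensorProduct.map_id, LinearMap.id_apply] at h
      have h3 : ρN (cE N (ρ' m)) = 0 := by
        have h4 := congrArg (fun z => z - ρ' m) h
        simpa using h4
      have h5 := congrArg (cE N) h3
      rw [hNcu] at h5
      simpa using h5
    constructor
    · apply LinearMap.ext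
      rintro ⟨n, m⟩
      show cE (N × M) (sumCo k A ρM ρN ρ' (n, m)) = (n, m)
      rw [sumCo_apply, map_add, map_add, cE_nat, cE_nat, cE_nat, hNcu, E0, hMcu]
      simp
    · apply LinearMap.ext
      rintro ⟨n, m⟩
      simp only [LinearMap.comp_apply, LinearEquiv.coe_coe]
      rw [co_l, co_r, hNca, hMca, ← hc2p m, map_add]
      abel


theorem yd_iff (hMyd : ydLHS k A ωM ρM = hopfRHS k A ωM ρM)
    (hNyd : ydLHS k A ωN ρN = hopfRHS k A ωN ρN) :
    ydLHS k A (sumAct k A ωM ωN ω') (sumCo k A ρM ρN ρ') =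
        hopfRHS k A (sumAct k A ωM ωN ω') (sumCo k A ρM ρN ρ') ↔
      Cocycle3YD k A ωM ρM ωN ρN ω' ρ' := by
  constructor
  · intro h
    unfold Cocycle3YD
    apply TensorProduct.ext'
    intro a m
    have hp := LinearMap.congr_fun h (a ⊗ₜ ((0 : N), m))
    rw [ydsum_apply, hopfsum_apply] at hp
    have z1 : ydLHS k A ωN ρN (a ⊗ₜ (0 : N)) = 0 := by rw [tmul_zero]; exact map_zero _
    have z2 : hopfRHS k A ωN ρN (a ⊗ₜ (0 : N)) = 0 := by rw [tmul_zero]; exact map_zero _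
    rw [z1, z2, zero_add, zero_add] at hp
    have hp2 := congrArg (TensorProduct.map (fst k N M) (LinearMap.id : A →ₗ[k] A)) hp
    simp only [map_add, projInl, projInr0, add_zero] at hp2
    simp only [LinearMap.add_apply]
    rw [add_comm (mixLHS k A ω' ρM (a ⊗ₜ[k] m)), add_comm (mixRHS k A ωM ρ' (a ⊗ₜ[k] m))]
    exact hp2.symm
  · intro hc
    apply TensorProduct.ext'
    rintro a ⟨n, m⟩
    rw [ydsum_apply, hopfsum_apply]
    have h1 := LinearMap.congr_fun hNyd (a ⊗ₜ n)
    have h4 := LinearMap.congr_fun hMyd (a ⊗ₜ m)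
    have h23 := LinearMap.congr_fun hc (a ⊗ₜ m)
    simp only [LinearMap.add_apply] at h23
    rw [h1, h4]
    have e : mixRHS' k A ω' ρN (a ⊗ₜ m) + mixRHS k A ωM ρ' (a ⊗ₜ m) =
        mixLHS' k A ωN ρ' (a ⊗ₜ m) + mixLHS k A ω' ρM (a ⊗ₜ m) := by
      calc mixRHS' k A ω' ρN (a ⊗ₜ m) + mixRHS k A ωM ρ' (a ⊗ₜ m)
          = mixRHS k A ωM ρ' (a ⊗ₜ m) + mixRHS' k A ω' ρN (a ⊗ₜ m) := add_comm _ _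
        _ = mixLHS k A ω' ρM (a ⊗ₜ m) + mixLHS' k A ωN ρ' (a ⊗ₜ m) := h23.symm
        _ = mixLHS' k A ωN ρ' (a ⊗ₜ m) + mixLHS k A ω' ρM (a ⊗ₜ m) := add_comm _ _
    rw [add_assoc, add_assoc, e]

end Equivs

/-- `N ⊕_{(ω',ρ')} M` with the action `a·(n,m) = (a·n + ω'(a⊗m), a·m)`
and the coaction `λ(n,m) = ρ_N(n) + ρ'(m) + ρ_M(m)` is a left-right Yetter-Drinfel'd
module over `A` if and only if `(ω',ρ') ∈ Z^1(M,N)`. -/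
theorem sum_isYD_iff_Z1 (k : Type) [Field k] (A : Type) [Ring A] [Bialgebra k A]
    (M N : Type) [AddCommGroup M] [Module k M] [AddCommGroup N] [Module k N]
    (ωM : A ⊗[k] M →ₗ[k] M) (ρM : M →ₗ[k] M ⊗[k] A)
    (ωN : A ⊗[k] N →ₗ[k] N) (ρN : N →ₗ[k] N ⊗[k] A)
    (hM : IsYetterDrinfeld k A ωM ρM) (hN : IsYetterDrinfeld k A ωN ρN)
    (ω' : A ⊗[k] M →ₗ[k] N) (ρ' : M →ₗ[k] N ⊗[k] A) :
    IsYetterDrinfeld k A (sumAct k A ωM ωN ω') (sumCo k A ρM ρN ρ') ↔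
      Z1YD k A ωM ρM ωN ρN ω' ρ' := by
  constructor
  · rintro ⟨hmod, hcom, hyd⟩
    exact ⟨(mod_iff ωM ωN ω' hM.1 hN.1).mp hmod,
      (comod_iff ρM ρN ρ' hM.2.1 hN.2.1).mp hcom,
      (yd_iff ωM ρM ωN ρN ω' ρ' hM.2.2 hN.2.2).mp hyd⟩
  · rintro ⟨c1, c2, c3⟩
    exact ⟨(mod_iff ωM ωN ω' hM.1 hN.1).mpr c1,
      (comod_iff ρM ρN ρ' hM.2.1 hN.2.1).mpr c2,
      (yd_iff ωM ρM ωN ρN ω' ρ' hM.2.2 hN.2.2).mpr c3⟩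

end PS
end
end
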